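/- Let N ≥ 1 be an integer, ν > 0 real, τ ∈ (0,1), and let 0 ≤ k ≤ N−1 be an integer. Then for every z ∈ ℂ, |𝓘_k(z)| ≤ e^{τ√ν·(|z| + Re z)}. More precisely, |𝓘_k(z)| ≤ e^{τ√ν·(|z|+Re z)}·𝓘_k(−|z|) and 𝓘_k(−|z|) ≤ 1. -/

import Mathlib

open Finset Filter

/-!
The coefficients of `L_j^μ(-x)` are nonnegative, so `|L_j^μ(w)| ≤ L_j^μ(-|w|)`; applied termwise
this bounds `|𝓘_k(z)|` by `e^{τ√ν Re z}` times the nonnegative majorant `e^{τ√ν|z|} 𝓘_k(-|z|)`.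
That majorant is a truncation of the generating function
`∑_j s^j L_j^μ(-y) = (1-s)^{-μ-1} e^{sy/(1-s)}` at `s = τ²`, `y = a|z|`, where `sy/(1-s) = τ√ν|z|`,
so `𝓘_k(-|z|) ≤ 1`. Since all terms are nonnegative, the truncation bound follows by exchanging
the two sums, which reduces it to the binomial series `∑_m Γ(β+m)/m! s^m = Γ(β) (1-s)^{-β}`.
-/

/-- Generalized Laguerre polynomial `L_j^ν(z)`. -/
noncomputable def Lag (ν : ℝ) (j : ℕ) (z : ℂ) : ℂ :=
  ∑ k ∈ range (j + 1),
    ((Real.Gamma ((j : ℝ) + ν + 1) /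
        (((j - k).factorial : ℝ) * Real.Gamma (ν + (k : ℝ) + 1)) : ℝ) : ℂ) *
      (-z) ^ k / ((k.factorial : ℕ) : ℂ)

/-- The partial sum `𝓘_k(z) = (1−τ²)^{ν+2k+1}·e^{τ√ν·z}·∑_{j=0}^{N−1−k} τ^{2j}·L_j^{ν+2k}(a·z)`
with `a = (1−τ²)√ν/τ`. -/
noncomputable def Ical (N : ℕ) (ν τ : ℝ) (k : ℕ) (z : ℂ) : ℂ :=
  (((1 - τ ^ 2) ^ (ν + 2 * k + 1) : ℝ) : ℂ) *
    Complex.exp (((τ * Real.sqrt ν : ℝ) : ℂ) * z) *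
    ∑ j ∈ range (N - k),
      ((τ ^ (2 * j) : ℝ) : ℂ) * Lag (ν + 2 * k) j ((((1 - τ ^ 2) * Real.sqrt ν / τ : ℝ) : ℂ) * z)

theorem Real.Gamma_add_nat_eq_ascPochhammer_mul {β : ℝ} (hβ : 0 < β) (n : ℕ) :
    Real.Gamma (β + n) = (ascPochhammer ℝ n).eval β * Real.Gamma β := by
  induction n with
  | zero => simp
  | succ n ih =>
    rw [Nat.cast_succ, ← add_assoc, Real.Gamma_add_one (by positivity), ih,
      ascPochhammer_succ_right, Polynomial.eval_mul, Polynomial.eval_add, Polynomial.eval_X,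
      Polynomial.eval_natCast]
    ring

theorem Real.hasSum_Gamma_add_div_factorial_mul_pow {β s : ℝ} (hβ : 0 < β) (hs : |s| < 1) :
    HasSum (fun m : ℕ => Real.Gamma (β + m) / m.factorial * s ^ m)
      (Real.Gamma β * (1 - s) ^ (-β)) := by
  have hbinom : HasSum (fun m : ℕ => Ring.choose (β + m - 1) m * s ^ m) (1 / (1 - s) ^ β) := by
    have := (Real.one_div_one_sub_rpow_hasFPowerSeriesOnBall_zero β).hasSum (y := s)
      (by simpa [enorm_eq_nnnorm, ← NNReal.coe_lt_coe] using hs)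
    simpa [FormalMultilinearSeries.ofScalars_apply_eq, mul_comm] using this
  have hchoose (m : ℕ) :
      Real.Gamma (β + m) / m.factorial = Real.Gamma β * Ring.choose (β + m - 1) m := by
    rw [Ring.choose_eq_smul, Polynomial.descPochhammer_smeval_eq_ascPochhammer, smul_eq_mul,
      Polynomial.ascPochhammer_smeval_eq_eval, Real.Gamma_add_nat_eq_ascPochhammer_mul hβ]
    ring_nf
  rw [Real.rpow_neg (by linarith [le_abs_self s]), ← one_div]
  simpa only [hchoose, mul_assoc] using hbinom.mul_left (Real.Gamma β)

theorem Real.sum_range_Gamma_add_div_factorial_mul_pow_le {β s : ℝ} (hβ : 0 < β)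
    (hs₀ : 0 ≤ s) (hs₁ : s < 1) (K : ℕ) :
    ∑ m ∈ range K, Real.Gamma (β + m) / m.factorial * s ^ m ≤ Real.Gamma β * (1 - s) ^ (-β) :=
  sum_le_hasSum _
    (fun m _ => by have := Real.Gamma_pos_of_pos (by positivity : 0 < β + m); positivity)
    (Real.hasSum_Gamma_add_div_factorial_mul_pow hβ (abs_lt.2 ⟨by linarith, hs₁⟩))

noncomputable def lagCoeff (μ : ℝ) (j i : ℕ) : ℝ :=
  Real.Gamma ((j : ℝ) + μ + 1) / (((j - i).factorial : ℝ) * Real.Gamma (μ + (i : ℝ) + 1))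

noncomputable def lagNeg (μ : ℝ) (j : ℕ) (x : ℝ) : ℝ :=
  ∑ i ∈ range (j + 1), lagCoeff μ j i * x ^ i / i.factorial

section Laguerre

variable {μ : ℝ}

lemma lagCoeff_nonneg (hμ : -1 < μ) (j i : ℕ) : 0 ≤ lagCoeff μ j i := by
  have := Real.Gamma_pos_of_pos (by linarith [j.cast_nonneg (α := ℝ)] : 0 < (j : ℝ) + μ + 1)
  have := Real.Gamma_pos_of_pos (by linarith [i.cast_nonneg (α := ℝ)] : 0 < μ + (i : ℝ) + 1)
  unfold lagCoeff
  positivity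

lemma lagCoeff_add_left (i m : ℕ) :
    lagCoeff μ (i + m) i =
      Real.Gamma ((μ + i + 1) + m) / (m.factorial * Real.Gamma (μ + i + 1)) := by
  rw [lagCoeff, Nat.add_sub_cancel_left]
  push_cast
  ring_nf

lemma Lag_neg_ofReal (μ : ℝ) (j : ℕ) (x : ℝ) : Lag μ j (-(x : ℂ)) = lagNeg μ j x := by
  simp [Lag, lagNeg, lagCoeff]

lemma norm_Lag_le (hμ : -1 < μ) (j : ℕ) (w : ℂ) : ‖Lag μ j w‖ ≤ lagNeg μ j ‖w‖ := by
  refine (norm_sum_le _ _).trans (sum_le_sum fun i _ => le_of_eq ?_)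
  rw [norm_div, norm_mul, norm_pow, norm_neg, Complex.norm_real, Real.norm_eq_abs,
    Complex.norm_natCast, ← lagCoeff, abs_of_nonneg (lagCoeff_nonneg hμ j i)]

variable {s : ℝ}

lemma sum_range_pow_add_mul_lagCoeff_le (hμ : -1 < μ) (hs₀ : 0 ≤ s) (hs₁ : s < 1) (i K : ℕ) :
    ∑ m ∈ range K, s ^ (i + m) * lagCoeff μ (i + m) i ≤
      (1 - s) ^ (-(μ + 1)) * (s / (1 - s)) ^ i := by
  have hβ : 0 < μ + i + 1 := by linarith [i.cast_nonneg (α := ℝ)]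
  have h1s : 0 < 1 - s := by linarith
  calc ∑ m ∈ range K, s ^ (i + m) * lagCoeff μ (i + m) i
      = s ^ i / Real.Gamma (μ + i + 1) *
          ∑ m ∈ range K, Real.Gamma ((μ + i + 1) + m) / m.factorial * s ^ m := by
        rw [mul_sum]
        refine sum_congr rfl fun m _ => ?_
        rw [lagCoeff_add_left, pow_add]
        field_simp
    _ ≤ s ^ i / Real.Gamma (μ + i + 1) * (Real.Gamma (μ + i + 1) * (1 - s) ^ (-(μ + i + 1))) := by
        gcongr
        exact Real.sum_range_Gamma_add_div_factorial_mul_pow_le hβ hs₀ hs₁ K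
    _ = (1 - s) ^ (-(μ + 1)) * (s / (1 - s)) ^ i := by
        rw [show -(μ + i + 1) = -(μ + 1) + -(i : ℝ) by ring, Real.rpow_add h1s,
          Real.rpow_neg h1s.le (i : ℝ), Real.rpow_natCast, div_pow]
        field_simp

lemma sum_range_pow_mul_lagNeg_le (hμ : -1 < μ) (hs₀ : 0 ≤ s) (hs₁ : s < 1) {y : ℝ} (hy : 0 ≤ y)
    (M : ℕ) :
    ∑ j ∈ range M, s ^ j * lagNeg μ j y ≤ (1 - s) ^ (-(μ + 1)) * Real.exp (s * y / (1 - s)) := by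
  calc ∑ j ∈ range M, s ^ j * lagNeg μ j y
      = ∑ j ∈ range M, ∑ i ∈ range (j + 1), s ^ j * (lagCoeff μ j i * y ^ i / i.factorial) := by
        simp only [lagNeg, mul_sum]
    _ = ∑ i ∈ range M, ∑ j ∈ Ico i M, s ^ j * (lagCoeff μ j i * y ^ i / i.factorial) :=
        sum_comm' fun j i => by simp only [mem_range, mem_Ico]; omega
    _ = ∑ i ∈ range M, y ^ i / i.factorial *
          ∑ m ∈ range (M - i), s ^ (i + m) * lagCoeff μ (i + m) i := by
        refine sum_congr rfl fun i _ => ?_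
        rw [sum_Ico_eq_sum_range, mul_sum]
        exact sum_congr rfl fun m _ => by ring
    _ ≤ ∑ i ∈ range M, y ^ i / i.factorial * ((1 - s) ^ (-(μ + 1)) * (s / (1 - s)) ^ i) := by
        gcongr with i
        exact sum_range_pow_add_mul_lagCoeff_le hμ hs₀ hs₁ i _
    _ = (1 - s) ^ (-(μ + 1)) * ∑ i ∈ range M, (s * y / (1 - s)) ^ i / i.factorial := by
        rw [mul_sum]
        exact sum_congr rfl fun i _ => by rw [mul_div_right_comm s, mul_pow]; ring
    _ ≤ (1 - s) ^ (-(μ + 1)) * Real.exp (s * y / (1 - s)) := by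
        gcongr
        exact Real.sum_le_exp_of_nonneg (by positivity) M

end Laguerre

noncomputable def IcalMajorant (N : ℕ) (ν τ : ℝ) (k : ℕ) (t : ℝ) : ℝ :=
  (1 - τ ^ 2) ^ (ν + 2 * k + 1) *
    ∑ j ∈ range (N - k), τ ^ (2 * j) * lagNeg (ν + 2 * k) j ((1 - τ ^ 2) * Real.sqrt ν / τ * t)

section Ical

variable {N k : ℕ} {ν τ : ℝ}

lemma Ical_neg_ofReal (t : ℝ) :
    Ical N ν τ k ((-t : ℝ) : ℂ) =
      (Real.exp (-(τ * Real.sqrt ν * t)) * IcalMajorant N ν τ k t : ℝ) := by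
  simp only [Ical, IcalMajorant, Complex.ofReal_mul, Complex.ofReal_exp, Complex.ofReal_sum,
    ← Lag_neg_ofReal]
  push_cast
  simp only [mul_neg, mul_sum]
  ring_nf

lemma norm_Ical_le (hν : -1 < ν) (hτ : τ ∈ Set.Ioo 0 1) (z : ℂ) :
    ‖Ical N ν τ k z‖ ≤ Real.exp (τ * Real.sqrt ν * z.re) * IcalMajorant N ν τ k ‖z‖ := by
  obtain ⟨hτ₀, hτ₁⟩ := hτ
  have h1τ : 0 ≤ 1 - τ ^ 2 := by nlinarith
  have hμ : -1 < ν + 2 * k := by linarith [k.cast_nonneg (α := ℝ)]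
  have hexp : ‖Complex.exp (((τ * Real.sqrt ν : ℝ) : ℂ) * z)‖ =
      Real.exp (τ * Real.sqrt ν * z.re) := by
    rw [Complex.norm_exp, Complex.re_ofReal_mul]
  rw [Ical, IcalMajorant, norm_mul, norm_mul, hexp, Complex.norm_real,
    Real.norm_of_nonneg (by positivity), mul_left_comm, mul_assoc]
  gcongr
  refine (norm_sum_le _ _).trans (sum_le_sum fun j _ => ?_)
  rw [norm_mul, Complex.norm_real, Real.norm_of_nonneg (by positivity)]
  gcongr
  refine (norm_Lag_le hμ j _).trans (le_of_eq ?_)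
  rw [norm_mul, Complex.norm_real, Real.norm_of_nonneg (by positivity)]

lemma IcalMajorant_le (hν : -1 < ν) (hτ : τ ∈ Set.Ioo 0 1) {t : ℝ} (ht : 0 ≤ t) :
    IcalMajorant N ν τ k t ≤ Real.exp (τ * Real.sqrt ν * t) := by
  obtain ⟨hτ₀, hτ₁⟩ := hτ
  have h1τ : 0 < 1 - τ ^ 2 := by nlinarith
  have hμ : -1 < ν + 2 * k := by linarith [k.cast_nonneg (α := ℝ)]
  have hbound := sum_range_pow_mul_lagNeg_le hμ (sq_nonneg τ) (by nlinarith)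
    (by positivity : 0 ≤ (1 - τ ^ 2) * Real.sqrt ν / τ * t) (N - k)
  have harg : τ ^ 2 * ((1 - τ ^ 2) * Real.sqrt ν / τ * t) / (1 - τ ^ 2) = τ * Real.sqrt ν * t := by
    field_simp
  simp only [harg, ← pow_mul] at hbound
  calc IcalMajorant N ν τ k t
      ≤ (1 - τ ^ 2) ^ (ν + 2 * k + 1) * ((1 - τ ^ 2) ^ (-(ν + 2 * k + 1)) *
          Real.exp (τ * Real.sqrt ν * t)) := by
        unfold IcalMajorant
        gcongr
    _ = Real.exp (τ * Real.sqrt ν * t) := by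
        rw [← mul_assoc, ← Real.rpow_add h1τ, add_neg_cancel, Real.rpow_zero, one_mul]

end Ical

theorem Ical_uniform_bound_general (N : ℕ) (ν : ℝ) (hν : 0 < ν)
    (τ : ℝ) (hτ : τ ∈ Set.Ioo (0 : ℝ) 1) (k : ℕ) (z : ℂ) :
    ‖Ical N ν τ k z‖
        ≤ Real.exp (τ * Real.sqrt ν * (‖z‖ + z.re)) *
            (Ical N ν τ k ((-(‖z‖) : ℝ) : ℂ)).re ∧
      (Ical N ν τ k ((-(‖z‖) : ℝ) : ℂ)).re ≤ 1 ∧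
      ‖Ical N ν τ k z‖ ≤ Real.exp (τ * Real.sqrt ν * (‖z‖ + z.re)) := by
  have hν' : -1 < ν := by linarith
  have hre : (Ical N ν τ k ((-(‖z‖) : ℝ) : ℂ)).re =
      Real.exp (-(τ * Real.sqrt ν * ‖z‖)) * IcalMajorant N ν τ k ‖z‖ := by
    rw [Ical_neg_ofReal, Complex.ofReal_re]
  have hnorm : ‖Ical N ν τ k z‖ ≤
      Real.exp (τ * Real.sqrt ν * (‖z‖ + z.re)) * (Ical N ν τ k ((-(‖z‖) : ℝ) : ℂ)).re := by
    rw [hre, ← mul_assoc, ← Real.exp_add]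
    convert norm_Ical_le hν' hτ z using 3
    ring
  have hle_one : (Ical N ν τ k ((-(‖z‖) : ℝ) : ℂ)).re ≤ 1 := by
    rw [hre, Real.exp_neg]
    exact (inv_mul_le_one₀ (Real.exp_pos _)).2 (IcalMajorant_le hν' hτ (norm_nonneg z))
  exact ⟨hnorm, hle_one, hnorm.trans (mul_le_of_le_one_right (Real.exp_pos _).le hle_one)⟩

/-- Uniform bound for `𝓘_k`: `|𝓘_k(z)| ≤ e^{τ√ν(|z|+Re z)}·𝓘_k(−|z|)` and `𝓘_k(−|z|) ≤ 1`,
so in particular `|𝓘_k(z)| ≤ e^{τ√ν(|z|+Re z)}`. -/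
theorem Ical_uniform_bound (N : ℕ) (hN : 1 ≤ N) (ν : ℝ) (hν : 0 < ν)
    (τ : ℝ) (hτ : τ ∈ Set.Ioo (0 : ℝ) 1) (k : ℕ) (hk : k ≤ N - 1) (z : ℂ) :
    ‖Ical N ν τ k z‖
        ≤ Real.exp (τ * Real.sqrt ν * (‖z‖ + z.re)) *
            (Ical N ν τ k ((-(‖z‖) : ℝ) : ℂ)).re ∧
      (Ical N ν τ k ((-(‖z‖) : ℝ) : ℂ)).re ≤ 1 ∧
      ‖Ical N ν τ k z‖ ≤ Real.exp (τ * Real.sqrt ν * (‖z‖ + z.re)) :=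
  Ical_uniform_bound_general N ν hν τ hτ k z
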